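/- arXiv:0910.5940 — 2 statements merged into one kernel-verified Lean document; each statement's English description precedes it below -/
import Mathlib

section
/- Let e ≥ 2 and let λ be an e-restricted partition of d. Then there exists at least one standard λ-tableau T whose residue sequence i^T equals the ladder weight j^λ. -/
/-!
Label the nodes of `λ` by `1, …, d` ladder by ladder, from top to bottom within each ladder.
A step to the right raises the ladder index by `1` and a step down raises it by `e - 1 ≥ 1`,
so the labelling is standard. The nodes of `L_m` receive exactly the labels
`R_{m-1} + 1, …, R_m`, and each of them has residue `b - a ≡ m - 1 (mod e)`.
-/

namespace KN

/-- A subset of `ℤ²_{≥1}` (encoded in `ℕ × ℕ`) shaped like a Young diagram: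
all coordinates are `≥ 1` and the set is closed under decreasing either coordinate
(staying `≥ 1`). -/
def IsDiagram (S : Set (ℕ × ℕ)) : Prop :=
  (∀ p ∈ S, 1 ≤ p.1 ∧ 1 ≤ p.2) ∧
  ∀ a b a' b', (a, b) ∈ S → 1 ≤ a' → a' ≤ a → 1 ≤ b' → b' ≤ b → (a', b') ∈ S

/-- The Young diagram of a partition given as a function `l : ℕ → ℕ`
(`l r` is the `r`-th part, for `r ≥ 1`): the nodes `(a, b)` with `a, b ≥ 1`, `b ≤ l a`. -/
def cells (l : ℕ → ℕ) : Set (ℕ × ℕ) := {p | 1 ≤ p.1 ∧ 1 ≤ p.2 ∧ p.2 ≤ l p.1}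

/-- `l` (indexed from `1`) is a weakly decreasing sequence of naturals, eventually zero. -/
def IsPartitionFun (l : ℕ → ℕ) : Prop :=
  (∀ r, 1 ≤ r → l (r + 1) ≤ l r) ∧ ∃ N, ∀ r, N ≤ r → l r = 0

/-- `l` is a partition of `d`: its Young diagram has exactly `d` nodes. -/
def IsPartitionOf (l : ℕ → ℕ) (d : ℕ) : Prop :=
  IsPartitionFun l ∧ (cells l).Finite ∧ (cells l).ncard = d

/-- `λ_r - λ_{r+1} < e` for all `r ≥ 1`. -/
def IsRestricted (e : ℕ) (l : ℕ → ℕ) : Prop := ∀ r, 1 ≤ r → l r < l (r + 1) + e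

/-- The `m`-th ladder `L_m = {(1 + k, m - k(e-1)) : k ≥ 0, k(e-1) < m}`. -/
def ladder (e m : ℕ) : Set (ℕ × ℕ) :=
  {p | ∃ k : ℕ, k * (e - 1) < m ∧ p = (1 + k, m - k * (e - 1))}

/-- The residue `b - a (mod e)` of a node `(a, b)`. -/
def res (e : ℕ) (p : ℕ × ℕ) : ZMod e := (p.2 : ZMod e) - (p.1 : ZMod e)

/-- `A` is a removable node of the diagram `S`. -/
def Removable (S : Set (ℕ × ℕ)) (A : ℕ × ℕ) : Prop := A ∈ S ∧ IsDiagram (S \ {A})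

/-- `B` is an addable node of the diagram `S`. -/
def Addable (S : Set (ℕ × ℕ)) (B : ℕ × ℕ) : Prop := B ∉ S ∧ IsDiagram (S ∪ {B})

/-- `σ_k` of a diagram: the number of nodes in rows `1, …, k`. -/
noncomputable def sigmaSet (S : Set (ℕ × ℕ)) (k : ℕ) : ℕ := (S ∩ {p | p.1 ≤ k}).ncard

/-- Dominance order on diagrams: `S ⊴ T` iff `σ_k(S) ≤ σ_k(T)` for all `k`. -/
def DomLE (S T : Set (ℕ × ℕ)) : Prop := ∀ k, sigmaSet S k ≤ sigmaSet T k

/-- `R_m = r_1(λ) + ⋯ + r_m(λ)` where `r_u(λ) = |λ ∩ L_u|`. -/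
noncomputable def Rlad (e : ℕ) (l : ℕ → ℕ) (m : ℕ) : ℕ :=
  ∑ u ∈ Finset.Icc 1 m, (cells l ∩ ladder e u).ncard

/-- The `s`-th entry of the ladder weight `j^λ`: it equals `m - 1 (mod e)` for the
unique `m` with `R_{m-1} < s ≤ R_m`. -/
noncomputable def ladderWeight (e : ℕ) (l : ℕ → ℕ) (s : ℕ) : ZMod e :=
  ((sInf {m : ℕ | s ≤ Rlad e l m} - 1 : ℕ) : ZMod e)

/-- A standard tableau of shape `S` (with `|S| = d`): a bijective labelling of the
nodes of `S` by `1, …, d`, increasing along rows and columns. -/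
def IsStandardTableau (S : Set (ℕ × ℕ)) (d : ℕ) (T : ℕ × ℕ → ℕ) : Prop :=
  (∀ p ∈ S, 1 ≤ T p ∧ T p ≤ d) ∧
  (∀ p ∈ S, ∀ q ∈ S, T p = T q → p = q) ∧
  (∀ s, 1 ≤ s → s ≤ d → ∃ p ∈ S, T p = s) ∧
  (∀ a b, (a, b) ∈ S → (a, b + 1) ∈ S → T (a, b) < T (a, b + 1)) ∧
  (∀ a b, (a, b) ∈ S → (a + 1, b) ∈ S → T (a, b) < T (a + 1, b))

/-- The degree `d_A(S)` of a removable node `A` of `S`: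
(number of addable nodes of `S` of the same residue strictly below `A`) minus
(number of removable nodes of `S` of the same residue strictly below `A`). -/
noncomputable def degNode (e : ℕ) (S : Set (ℕ × ℕ)) (A : ℕ × ℕ) : ℤ :=
  (({B | Addable S B ∧ res e B = res e A ∧ A.1 < B.1}).ncard : ℤ) -
  (({B | Removable S B ∧ res e B = res e A ∧ A.1 < B.1}).ncard : ℤ)

/-- The degree of a standard tableau: `deg(T) = Σ_{s=1}^d d_{A_s}(sh(T_{≤ s}))`,
written as a sum over the nodes `p` of `S` (with `s = T p`). -/
noncomputable def degTab (e : ℕ) (S : Set (ℕ × ℕ)) (T : ℕ × ℕ → ℕ) : ℤ :=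
  ∑ᶠ p ∈ S, degNode e {q | q ∈ S ∧ T q ≤ T p} p

/-- The set of standard tableaux of shape `S` (of size `d`) whose residue sequence
equals the ladder weight `j^λ` of the partition `l`; tableaux are normalized to
take the value `0` off `S`. -/
def LWTableaux (e d : ℕ) (l : ℕ → ℕ) (S : Set (ℕ × ℕ)) : Set ((ℕ × ℕ) → ℕ) :=
  {T | IsStandardTableau S d T ∧ (∀ p, p ∉ S → T p = 0) ∧
    ∀ p ∈ S, res e p = ladderWeight e l (T p)}

/-- The quantum integer `[n]_q = q^{n-1} + q^{n-3} + ⋯ + q^{1-n} ∈ ℤ[q, q⁻¹]`. -/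
noncomputable def qint (n : ℕ) : LaurentPolynomial ℤ :=
  ∑ k ∈ Finset.range n, LaurentPolynomial.T ((n : ℤ) - 1 - 2 * k)

/-- The quantum factorial `[n]_q! = [n]_q [n-1]_q ⋯ [1]_q`. -/
noncomputable def qfact (n : ℕ) : LaurentPolynomial ℤ :=
  ∏ k ∈ Finset.Icc 1 n, qint k

section KeyRank

variable {α β : Type*} [LinearOrder β] {f : α → β} {S : Set α}

noncomputable def keyRank (f : α → β) (S : Set α) (p : α) : ℕ := (S ∩ {q | f q ≤ f p}).ncard

lemma keyRank_lt_keyRank (hS : S.Finite) {p q : α} (hq : q ∈ S) (h : f p < f q) :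
    keyRank f S p < keyRank f S q := by
  refine Set.ncard_lt_ncard ⟨fun r hr => ⟨hr.1, hr.2.trans h.le⟩, fun hsub => ?_⟩
    (hS.inter_of_left _)
  exact (h.trans_le (hsub ⟨hq, le_rfl⟩).2).false

lemma one_le_keyRank (hS : S.Finite) {p : α} (hp : p ∈ S) : 1 ≤ keyRank f S p :=
  (Set.ncard_pos (hS.inter_of_left _)).mpr ⟨p, hp, le_rfl⟩

lemma keyRank_le_ncard (hS : S.Finite) (p : α) : keyRank f S p ≤ S.ncard :=
  Set.ncard_le_ncard Set.inter_subset_left hS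

lemma keyRank_injOn (hS : S.Finite) (hf : S.InjOn f) : S.InjOn (keyRank f S) := by
  intro p hp q hq hpq
  by_contra hne
  rcases lt_or_gt_of_ne (hf.ne hp hq hne) with h | h
  · exact (keyRank_lt_keyRank hS hq h).ne hpq
  · exact (keyRank_lt_keyRank hS hp h).ne' hpq

lemma image_keyRank (hS : S.Finite) (hf : S.InjOn f) :
    keyRank f S '' S = Set.Icc 1 S.ncard := by
  refine Set.eq_of_subset_of_ncard_le ?_ ?_ (Set.finite_Icc _ _)
  · rintro _ ⟨p, hp, rfl⟩
    exact ⟨one_le_keyRank hS hp, keyRank_le_ncard hS p⟩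
  · rw [(keyRank_injOn hS hf).ncard_image, Set.ncard_Icc_nat]
    omega

/-- As the key order refines `g`, each sublevel set of `g` is an initial segment of `S`
in the key order. -/
lemma keyRank_le_ncard_iff {g : α → ℕ} (hS : S.Finite) (hfg : ∀ p q, g p < g q → f p < f q)
    {p : α} (hp : p ∈ S) (m : ℕ) :
    keyRank f S p ≤ (S ∩ {q | g q ≤ m}).ncard ↔ g p ≤ m := by
  constructor
  · intro hle
    by_contra! hlt
    have hsub : S ∩ {q | g q ≤ m} ⊆ (S ∩ {q | f q ≤ f p}) \ {p} := by
      rintro q ⟨hq, hqm : g q ≤ m⟩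
      refine ⟨⟨hq, (hfg q p (by omega)).le⟩, ?_⟩
      rintro rfl
      omega
    refine hle.not_gt ((Set.ncard_le_ncard hsub (hS.inter_of_left _).sdiff).trans_lt ?_)
    exact Set.ncard_sdiff_singleton_lt_of_mem ⟨hp, le_rfl⟩ (hS.inter_of_left _)
  · intro hpm
    refine Set.ncard_le_ncard (fun q hq => ⟨hq.1, ?_⟩) (hS.inter_of_left _)
    exact le_trans (not_lt.mp fun h => (hfg p q h).not_ge hq.2) hpm

lemma isStandardTableau_keyRank {f : ℕ × ℕ → β} {S : Set (ℕ × ℕ)} (hS : S.Finite)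
    (hf : S.InjOn f)
    (hrow : ∀ a b, (a, b) ∈ S → (a, b + 1) ∈ S → f (a, b) < f (a, b + 1))
    (hcol : ∀ a b, (a, b) ∈ S → (a + 1, b) ∈ S → f (a, b) < f (a + 1, b)) :
    IsStandardTableau S S.ncard (keyRank f S) := by
  refine ⟨fun p hp => ⟨one_le_keyRank hS hp, keyRank_le_ncard hS p⟩, keyRank_injOn hS hf,
    fun s hs1 hs2 => ?_, fun a b h h' => keyRank_lt_keyRank hS h' (hrow a b h h'),
    fun a b h h' => keyRank_lt_keyRank hS h' (hcol a b h h')⟩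
  rw [← Set.mem_image, image_keyRank hS hf]
  exact ⟨hs1, hs2⟩

end KeyRank

def ladderIndex (e : ℕ) (p : ℕ × ℕ) : ℕ := p.2 + (p.1 - 1) * (e - 1)

def ladderKey (e : ℕ) (p : ℕ × ℕ) : ℕ ×ₗ ℕ := toLex (ladderIndex e p, p.1)

lemma ladderKey_injective (e : ℕ) : Function.Injective (ladderKey e) := by
  rintro ⟨a, b⟩ ⟨a', b'⟩ h
  simp only [ladderKey, ladderIndex, toLex_inj, Prod.mk.injEq] at h ⊢
  obtain ⟨h, rfl⟩ := h
  omega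

lemma ladderKey_lt_ladderKey {e : ℕ} {p q : ℕ × ℕ} (h : ladderIndex e p < ladderIndex e q) :
    ladderKey e p < ladderKey e q :=
  Prod.Lex.toLex_lt_toLex.mpr (Or.inl h)

lemma ladderIndex_lt_succ_snd (e a b : ℕ) : ladderIndex e (a, b) < ladderIndex e (a, b + 1) := by
  simp only [ladderIndex]
  omega

lemma ladderIndex_lt_succ_fst {e a : ℕ} (he : 2 ≤ e) (ha : 1 ≤ a) (b : ℕ) :
    ladderIndex e (a, b) < ladderIndex e (a + 1, b) := by
  have : (a - 1) * (e - 1) < a * (e - 1) := Nat.mul_lt_mul_of_pos_right (by omega) (by omega)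
  simp only [ladderIndex, Nat.add_sub_cancel]
  omega

lemma mem_ladder_iff {e : ℕ} {p : ℕ × ℕ} (hp1 : 1 ≤ p.1) (hp2 : 1 ≤ p.2) (u : ℕ) :
    p ∈ ladder e u ↔ ladderIndex e p = u := by
  obtain ⟨a, b⟩ := p
  simp only [ladder, ladderIndex, Set.mem_ofPred_eq, Prod.mk.injEq] at hp1 hp2 ⊢
  constructor
  · rintro ⟨k, hk, rfl, rfl⟩
    simp only [Nat.add_sub_cancel_left]
    omega
  · rintro rfl
    exact ⟨a - 1, by omega, by omega, by omega⟩

lemma res_eq_ladderIndex {e : ℕ} (he : 1 ≤ e) {p : ℕ × ℕ} (hp1 : 1 ≤ p.1) (hp2 : 1 ≤ p.2) :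
    res e p = ((ladderIndex e p - 1 : ℕ) : ZMod e) := by
  obtain ⟨a, b⟩ := p
  obtain ⟨a, rfl⟩ := Nat.exists_eq_add_of_le' hp1
  obtain ⟨b, rfl⟩ := Nat.exists_eq_add_of_le' hp2
  obtain ⟨e, rfl⟩ := Nat.exists_eq_add_of_le' he
  have hzero : ((e + 1 : ℕ) : ZMod (e + 1)) = 0 := ZMod.natCast_self _
  have hidx : ladderIndex (e + 1) (a + 1, b + 1) - 1 = b + a * e := by
    simp only [ladderIndex, Nat.add_sub_cancel]
    omega
  rw [res, hidx]
  push_cast at hzero ⊢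
  linear_combination (-(a : ZMod (e + 1))) * hzero

lemma Rlad_eq_ncard {e : ℕ} {l : ℕ → ℕ} (hfin : (cells l).Finite) (m : ℕ) :
    Rlad e l m = (cells l ∩ {p | ladderIndex e p ≤ m}).ncard := by
  classical
  have hladder (u : ℕ) :
      cells l ∩ ladder e u = ↑(hfin.toFinset.filter fun p => ladderIndex e p = u) := by
    ext p
    simp only [Set.mem_inter_iff, Finset.coe_filter, Set.Finite.mem_toFinset, Set.mem_ofPred_eq]
    exact and_congr_right fun hp => mem_ladder_iff hp.1 hp.2.1 u
  have hsublevel :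
      cells l ∩ {p | ladderIndex e p ≤ m} = ↑(hfin.toFinset.filter (ladderIndex e · ≤ m)) := by
    ext; simp
  rw [Rlad, hsublevel, Set.ncard_coe_finset,
    Finset.card_eq_sum_card_fiberwise (f := ladderIndex e) (t := Finset.Icc 1 m)]
  · refine Finset.sum_congr rfl fun u hu => ?_
    rw [hladder, Set.ncard_coe_finset, Finset.filter_filter]
    refine congrArg _ (Finset.filter_congr fun p _ => ?_)
    have := (Finset.mem_Icc.mp hu).2
    constructor <;> omega
  · intro p hp
    simp only [Finset.coe_filter, Set.Finite.mem_toFinset, Set.mem_ofPred_eq] at hp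
    exact Finset.mem_coe.mpr (Finset.mem_Icc.mpr ⟨Nat.le_add_right_of_le hp.1.2.1, hp.2⟩)

lemma ladderWeight_keyRank {e : ℕ} {l : ℕ → ℕ} (hfin : (cells l).Finite) {p : ℕ × ℕ}
    (hp : p ∈ cells l) :
    ladderWeight e l (keyRank (ladderKey e) (cells l) p) =
      ((ladderIndex e p - 1 : ℕ) : ZMod e) := by
  have : {m | keyRank (ladderKey e) (cells l) p ≤ Rlad e l m} = Set.Ici (ladderIndex e p) := by
    ext m
    simp only [Set.mem_ofPred_eq, Set.mem_Ici, Rlad_eq_ncard hfin]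
    exact keyRank_le_ncard_iff hfin (fun _ _ => ladderKey_lt_ladderKey) hp m
  rw [ladderWeight, this, csInf_Ici]

theorem exists_ladder_tableau_general
    (e d : ℕ) (he : 2 ≤ e) (l : ℕ → ℕ)
    (hl : IsPartitionOf l d) :
    ∃ T : ℕ × ℕ → ℕ, IsStandardTableau (cells l) d T ∧
      ∀ p ∈ cells l, res e p = ladderWeight e l (T p) := by
  obtain ⟨-, hfin, rfl⟩ := hl
  refine ⟨keyRank (ladderKey e) (cells l),
    isStandardTableau_keyRank hfin (ladderKey_injective e).injOn
    (fun a b _ _ => ladderKey_lt_ladderKey (ladderIndex_lt_succ_snd e a b))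
    (fun a b hab _ => ladderKey_lt_ladderKey (ladderIndex_lt_succ_fst he hab.1 b)), fun p hp => ?_⟩
  rw [ladderWeight_keyRank hfin hp, res_eq_ladderIndex (by omega) hp.1 hp.2.1]

/-- there exists a standard `λ`-tableau with residue sequence `j^λ`. -/
theorem exists_ladder_tableau
    (e d : ℕ) (he : 2 ≤ e) (l : ℕ → ℕ)
    (hl : IsPartitionOf l d) (hrestr : IsRestricted e l) :
    ∃ T : ℕ × ℕ → ℕ, IsStandardTableau (cells l) d T ∧
      ∀ p ∈ cells l, res e p = ladderWeight e l (T p) :=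
  exists_ladder_tableau_general e d he l hl

end KN
end

section
/- Let e ≥ 2 and let λ be an e-restricted partition with bottom removable sequence (A_1,…,A_r). For a permutation σ of {1,…,r} and 1 ≤ j ≤ r, let λ^σ_j = λ ∖ {A_{σ(1)},…,A_{σ(j−1)}}. Then in ℤ[q,q^{−1}], Σ_{σ ∈ S_r} q^{Σ_{j=1}^{r} d_{A_{σ(j)}}(λ^σ_j)} = [r]_q!. -/
namespace KN

/-!
The nodes of the bottom ladder `L_t` are the last nodes of the rows `P - r + 1, …, P`, where `P` is
the last nonempty row, and neighbouring rows among these differ in length by `e - 1`. After some of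
these nodes are removed, the nodes of residue `t - 1` below a remaining node `A_k` are the removed
ones, which are now addable, and the remaining ones, which are still removable; every other addable
or removable node below it lies on the ladder `t ± 1` or is `(P + 1, 1)`, so has another residue.
Hence `A_{σ(j)}` has degree `m - (k - m)`, where `k` nodes of the sequence lie below it and `m` of
them, one for each earlier position of `σ` carrying a smaller value, are already removed; summed
over `j`, this is `r(r-1)/2` minus twice the number of inversions of `σ`.
Splitting a permutation of `{0, …, n}` into the position `p` of its largest value and the
remaining permutation shifts this statistic by `2p - n`, which produces the factor `[n + 1]_q`.
-/

open Finset

section Shape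

variable {l : ℕ → ℕ}

@[simp]
lemma mem_cells {x y : ℕ} : (x, y) ∈ cells l ↔ 1 ≤ x ∧ 1 ≤ y ∧ y ≤ l x := Iff.rfl

lemma IsPartitionFun.antitoneOn (hl : IsPartitionFun l) : AntitoneOn l (Set.Ici 1) :=
  antitoneOn_of_add_one_le Set.ordConnected_Ici fun a _ ha _ => hl.1 a ha

lemma isDiagram_cells (hl : AntitoneOn l (Set.Ici 1)) : IsDiagram (cells l) :=
  ⟨fun _ hp => ⟨hp.1, hp.2.1⟩, fun _ _ _ _ ⟨ha, _, hb⟩ ha' ha'a hb' hb'b =>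
    ⟨ha', hb', hb'b.trans (hb.trans (hl ha' ha ha'a))⟩⟩

def rowEndNode (l : ℕ → ℕ) (x : ℕ) : ℕ × ℕ := (x, l x)

@[simp]
lemma rowEndNode_fst (l : ℕ → ℕ) (x : ℕ) : (rowEndNode l x).1 = x := rfl

lemma rowEndNode_injective (l : ℕ → ℕ) : Function.Injective (rowEndNode l) :=
  fun _ _ h => congrArg Prod.fst h

def lowerRows (l : ℕ → ℕ) (R : Finset ℕ) (x : ℕ) : ℕ := if x ∈ R then l x - 1 else l x

lemma lowerRows_of_mem {R : Finset ℕ} {x : ℕ} (hx : x ∈ R) : lowerRows l R x = l x - 1 :=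
  if_pos hx

lemma lowerRows_of_notMem {R : Finset ℕ} {x : ℕ} (hx : x ∉ R) : lowerRows l R x = l x :=
  if_neg hx

lemma lowerRows_le (l : ℕ → ℕ) (R : Finset ℕ) (x : ℕ) : lowerRows l R x ≤ l x := by
  unfold lowerRows
  split_ifs <;> omega

lemma sub_one_le_lowerRows (l : ℕ → ℕ) (R : Finset ℕ) (x : ℕ) :
    l x - 1 ≤ lowerRows l R x := by
  unfold lowerRows
  split_ifs <;> omega

lemma cells_lowerRows (l : ℕ → ℕ) (R : Finset ℕ) :
    cells (lowerRows l R) = cells l \ rowEndNode l '' R := by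
  ext ⟨x, y⟩
  simp only [mem_cells, Set.mem_sdiff, Set.mem_image, mem_coe, rowEndNode, Prod.mk.injEq,
    ↓existsAndEq, lowerRows]
  split_ifs with hx
  · simp only [hx, true_and]
    omega
  · simp only [hx, false_and, not_false_eq_true, and_true]

lemma removable_cells_iff (hl : AntitoneOn l (Set.Ici 1)) {x y : ℕ} :
    Removable (cells l) (x, y) ↔ 1 ≤ x ∧ 1 ≤ y ∧ y = l x ∧ l (x + 1) < l x := by
  constructor
  · rintro ⟨hA, -, hd⟩
    obtain ⟨hx, hy, hyl⟩ := mem_cells.mp hA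
    have hrow : ¬ y < l x := fun h => by
      simpa using hd x (y + 1) x y ⟨mem_cells.mpr ⟨hx, by omega, h⟩, by simp⟩ hx le_rfl hy
        (by omega)
    have hcol : ¬ y ≤ l (x + 1) := fun h => by
      simpa using hd (x + 1) y x y ⟨mem_cells.mpr ⟨by omega, hy, h⟩, by simp⟩ hx (by omega) hy
        le_rfl
    exact ⟨hx, hy, by omega, by omega⟩
  · rintro ⟨hx, hy, rfl, hlt⟩
    refine ⟨mem_cells.mpr ⟨hx, hy, le_rfl⟩, fun p hp => (isDiagram_cells hl).1 p hp.1, ?_⟩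
    rintro a b a' b' ⟨hab, hne⟩ ha' ha'a hb' hb'b
    refine ⟨(isDiagram_cells hl).2 a b a' b' hab ha' ha'a hb' hb'b, ?_⟩
    rintro ⟨⟩
    have hbl := (mem_cells.mp hab).2.2
    rcases ha'a.eq_or_lt with rfl | hxa
    · exact hne (by simp only [Set.mem_singleton_iff, Prod.mk.injEq, true_and]; omega)
    · have := hl (Set.mem_Ici.mpr (by omega)) (Set.mem_Ici.mpr (by omega)) (show x + 1 ≤ a from hxa)
      omega

lemma addable_cells_iff (hl : AntitoneOn l (Set.Ici 1)) {x y : ℕ} :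
    Addable (cells l) (x, y) ↔ 1 ≤ x ∧ y = l x + 1 ∧ (x = 1 ∨ y ≤ l (x - 1)) := by
  constructor
  · rintro ⟨hnot, hpos, hd⟩
    have hB : (x, y) ∈ cells l ∪ {(x, y)} := Or.inr rfl
    obtain ⟨hx, hy⟩ := hpos _ hB
    have hgt : l x < y := by
      by_contra h
      exact hnot (mem_cells.mpr ⟨hx, hy, by omega⟩)
    have hle : y ≤ l x + 1 := by
      by_contra h
      have := hd x y x (y - 1) hB hx le_rfl (by omega) (by omega)
      simp only [Set.mem_union, mem_cells, Set.mem_singleton_iff, Prod.mk.injEq] at this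
      omega
    refine ⟨hx, by omega, ?_⟩
    rcases hx.eq_or_lt with h | h
    · exact Or.inl h.symm
    · have := hd x y (x - 1) y hB (by omega) (by omega) hy le_rfl
      simp only [Set.mem_union, mem_cells, Set.mem_singleton_iff, Prod.mk.injEq] at this
      omega
  · rintro ⟨hx, rfl, hcase⟩
    refine ⟨fun h => by simpa using h.2.2, ?_, ?_⟩
    · rintro p (hp | rfl)
      exacts [(isDiagram_cells hl).1 p hp, ⟨hx, by omega⟩]
    · rintro a b a' b' (hab | hab) ha' ha'a hb' hb'b
      · exact Or.inl ((isDiagram_cells hl).2 a b a' b' hab ha' ha'a hb' hb'b)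
      · simp only [Set.mem_singleton_iff, Prod.mk.injEq] at hab
        obtain ⟨rfl, rfl⟩ := hab
        simp only [Set.mem_union, mem_cells, Set.mem_singleton_iff, Prod.mk.injEq]
        rcases ha'a.eq_or_lt with rfl | ha'a
        · omega
        · have : l (a - 1) ≤ l a' :=
            hl (Set.mem_Ici.mpr ha') (Set.mem_Ici.mpr (by omega)) (by omega)
          omega

end Shape

section Ladder

variable {e : ℕ}

lemma mem_ladder_iff_s9 {m x y : ℕ} :
    (x, y) ∈ ladder e m ↔ 1 ≤ x ∧ 1 ≤ y ∧ y + (x - 1) * (e - 1) = m := by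
  constructor
  · rintro ⟨k, hk, hxy⟩
    simp only [Prod.mk.injEq] at hxy
    obtain ⟨rfl, rfl⟩ := hxy
    refine ⟨by omega, by omega, ?_⟩
    rw [Nat.add_sub_cancel_left]
    omega
  · rintro ⟨hx, hy, rfl⟩
    exact ⟨x - 1, by omega, by simp only [Prod.mk.injEq]; omega⟩

lemma res_add_of_ladder (he : 1 ≤ e) {x y x' y' d : ℕ} (hx : 1 ≤ x) (hx' : 1 ≤ x')
    (h : y' + (x' - 1) * (e - 1) = y + (x - 1) * (e - 1) + d) :
    res e (x', y') = res e (x, y) + d := by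
  have hcast := congrArg (Nat.cast : ℕ → ZMod e) h
  push_cast [Nat.cast_sub hx, Nat.cast_sub hx', Nat.cast_sub he, ZMod.natCast_self] at hcast
  unfold res
  linear_combination hcast

lemma res_eq_of_ladder (he : 1 ≤ e) {x y x' y' : ℕ} (hx : 1 ≤ x) (hx' : 1 ≤ x')
    (h : y' + (x' - 1) * (e - 1) = y + (x - 1) * (e - 1)) : res e (x', y') = res e (x, y) := by
  simpa using res_add_of_ladder (d := 0) he hx hx' h

lemma res_ne_of_ladder {x y x' y' d : ℕ} (hx : 1 ≤ x) (hx' : 1 ≤ x') (hd : 0 < d) (hde : d < e)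
    (h : y' + (x' - 1) * (e - 1) = y + (x - 1) * (e - 1) + d) : res e (x', y') ≠ res e (x, y) := by
  rw [res_add_of_ladder (by omega) hx hx' h, ne_eq, add_eq_left, ZMod.natCast_eq_zero_iff]
  exact fun hdvd => (Nat.le_of_dvd hd hdvd).not_gt hde

end Ladder

lemma sub_one_mul_add_self {x : ℕ} (hx : 1 ≤ x) (m : ℕ) : (x - 1) * m + m = x * m := by
  rw [← Nat.succ_mul, Nat.succ_eq_add_one, Nat.sub_add_cancel hx]

/-- The rows `Q + 1, …, P` of a bottom removable sequence on the ladder `t`: they are nonempty,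
their last nodes lie on `L_t`, and `P` is the last nonempty row. -/
structure IsBottomStaircase (e : ℕ) (l : ℕ → ℕ) (Q P t : ℕ) : Prop where
  pos : ∀ x ∈ Ioc Q P, 1 ≤ l x
  rowEnd_eq : ∀ x ∈ Ioc Q P, l x + (x - 1) * (e - 1) = t
  eq_zero : ∀ x, P < x → l x = 0
  lt : l P < e

namespace IsBottomStaircase

variable {e : ℕ} {l : ℕ → ℕ} {Q P t x : ℕ} {R : Finset ℕ}

lemma succ_lt (he : 2 ≤ e) (hst : IsBottomStaircase e l Q P t) (hx : x ∈ Ioc Q P) :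
    l (x + 1) < l x := by
  have hpos := hst.pos x hx
  rw [mem_Ioc] at hx
  rcases hx.2.eq_or_lt with rfl | hxP
  · rw [hst.eq_zero (x + 1) (by omega)]
    omega
  · have h := hst.rowEnd_eq (x + 1) (mem_Ioc.mpr ⟨by omega, hxP⟩)
    have := hst.rowEnd_eq x (mem_Ioc.mpr ⟨by omega, by omega⟩)
    have := sub_one_mul_add_self (show 1 ≤ x by omega) (e - 1)
    rw [Nat.add_sub_cancel] at h
    omega

lemma antitoneOn_lowerRows (he : 2 ≤ e) (hl : AntitoneOn l (Set.Ici 1))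
    (hst : IsBottomStaircase e l Q P t) (hR : R ⊆ Ioc Q P) :
    AntitoneOn (lowerRows l R) (Set.Ici 1) := by
  refine antitoneOn_of_add_one_le Set.ordConnected_Ici fun x _ hx _ => ?_
  have hle := lowerRows_le l R (x + 1)
  by_cases hxR : x ∈ R
  · have := hst.succ_lt he (hR hxR)
    rw [lowerRows_of_mem hxR]
    omega
  · have : l (x + 1) ≤ l x := hl hx (Set.mem_Ici.mpr (Nat.le_succ_of_le hx)) (by omega)
    rw [lowerRows_of_notMem hxR]
    omega

lemma res_succ_one_ne (hst : IsBottomStaircase e l Q P t) {x₀ : ℕ} (hx₀ : x₀ ∈ Ioc Q P) :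
    res e (P + 1, 1) ≠ res e (rowEndNode l x₀) := by
  have hx₀P := mem_Ioc.mp hx₀
  have hP : P ∈ Ioc Q P := mem_Ioc.mpr ⟨by omega, le_rfl⟩
  have := hst.rowEnd_eq x₀ hx₀
  have := hst.rowEnd_eq P hP
  have := hst.pos P hP
  have := hst.lt
  have := sub_one_mul_add_self (show 1 ≤ P by omega) (e - 1)
  exact res_ne_of_ladder (d := e - l P) (by omega) (by omega) (by omega) (by omega)
    (by rw [Nat.add_sub_cancel]; omega)

lemma setOf_addable_lowerRows (he : 2 ≤ e) (hl : AntitoneOn l (Set.Ici 1))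
    (hst : IsBottomStaircase e l Q P t) (hR : R ⊆ Ioc Q P) {x₀ : ℕ} (hx₀ : x₀ ∈ Ioc Q P) :
    {B | Addable (cells (lowerRows l R)) B ∧ res e B = res e (rowEndNode l x₀) ∧ x₀ < B.1} =
      rowEndNode l '' ↑(R.filter (x₀ < ·)) := by
  have hQx₀ := (mem_Ioc.mp hx₀).1
  have ht₀ := hst.rowEnd_eq x₀ hx₀
  ext ⟨x, y⟩
  simp only [Set.mem_ofPred_eq, addable_cells_iff (hst.antitoneOn_lowerRows he hl hR),
    Set.mem_image, mem_coe, mem_filter, rowEndNode, Prod.mk.injEq]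
  constructor
  · rintro ⟨⟨hx, rfl, hcase⟩, hres, hx₀x⟩
    have hprev : lowerRows l R x + 1 ≤ lowerRows l R (x - 1) := hcase.resolve_left (by omega)
    have hxP : x ≤ P + 1 := by
      by_contra h
      have := lowerRows_le l R (x - 1)
      rw [hst.eq_zero (x - 1) (by omega)] at this
      omega
    rcases hxP.lt_or_eq with hxP | rfl
    · have hxI : x ∈ Ioc Q P := mem_Ioc.mpr ⟨by omega, by omega⟩
      have htx := hst.rowEnd_eq x hxI
      have := hst.pos x hxI
      by_cases hxR : x ∈ R
      · rw [lowerRows_of_mem hxR]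
        exact ⟨x, ⟨hxR, hx₀x⟩, rfl, by omega⟩
      · rw [lowerRows_of_notMem hxR] at hres
        exact absurd hres (res_ne_of_ladder (d := 1) (by omega) (by omega) one_pos (by omega)
          (by omega))
    · have hPR : P + 1 ∉ R := fun h => by have := (mem_Ioc.mp (hR h)).2; omega
      rw [lowerRows_of_notMem hPR, hst.eq_zero (P + 1) (by omega)] at hres
      exact absurd hres (hst.res_succ_one_ne hx₀)
  · rintro ⟨x, ⟨hxR, hx₀x⟩, rfl, rfl⟩
    have hxI := hR hxR
    have := hst.pos x hxI
    have hx₁ : x - 1 ∈ Ioc Q P := by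
      have := mem_Ioc.mp hxI
      exact mem_Ioc.mpr ⟨by omega, by omega⟩
    have hlt := hst.succ_lt he hx₁
    rw [Nat.sub_add_cancel (by omega)] at hlt
    have := sub_one_le_lowerRows l R (x - 1)
    rw [lowerRows_of_mem hxR]
    exact ⟨⟨by omega, by omega, Or.inr (by omega)⟩,
      res_eq_of_ladder (by omega) (by omega) (by omega) (by rw [hst.rowEnd_eq x hxI, ht₀]), hx₀x⟩

lemma setOf_removable_lowerRows (he : 2 ≤ e) (hl : AntitoneOn l (Set.Ici 1))
    (hst : IsBottomStaircase e l Q P t) (hR : R ⊆ Ioc Q P) {x₀ : ℕ} (hx₀ : x₀ ∈ Ioc Q P) :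
    {B | Removable (cells (lowerRows l R)) B ∧ res e B = res e (rowEndNode l x₀) ∧ x₀ < B.1} =
      rowEndNode l '' ↑((Ioc x₀ P).filter (· ∉ R)) := by
  have hQx₀ := (mem_Ioc.mp hx₀).1
  have ht₀ := hst.rowEnd_eq x₀ hx₀
  ext ⟨x, y⟩
  simp only [Set.mem_ofPred_eq, removable_cells_iff (hst.antitoneOn_lowerRows he hl hR),
    Set.mem_image, mem_coe, mem_filter, mem_Ioc, rowEndNode, Prod.mk.injEq]
  constructor
  · rintro ⟨⟨hx, hy, rfl, -⟩, hres, hx₀x⟩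
    have hxP : x ≤ P := by
      by_contra h
      have := lowerRows_le l R x
      rw [hst.eq_zero x (by omega)] at this
      omega
    by_cases hxR : x ∈ R
    · rw [lowerRows_of_mem hxR] at hres hy
      have htx := hst.rowEnd_eq x (hR hxR)
      exact absurd hres.symm (res_ne_of_ladder (d := 1) (by omega) (by omega) one_pos (by omega)
        (by omega))
    · exact ⟨x, ⟨⟨hx₀x, hxP⟩, hxR⟩, rfl, (lowerRows_of_notMem hxR).symm⟩
  · rintro ⟨x, ⟨⟨hx₀x, hxP⟩, hxR⟩, rfl, rfl⟩
    have hxI : x ∈ Ioc Q P := mem_Ioc.mpr ⟨by omega, hxP⟩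
    rw [lowerRows_of_notMem hxR]
    exact ⟨⟨by omega, hst.pos x hxI, rfl,
      (lowerRows_le l R (x + 1)).trans_lt (hst.succ_lt he hxI)⟩,
      res_eq_of_ladder (by omega) (by omega) (by omega) (by rw [hst.rowEnd_eq x hxI, ht₀]), hx₀x⟩

theorem degNode_lowerRows (he : 2 ≤ e) (hl : AntitoneOn l (Set.Ici 1))
    (hst : IsBottomStaircase e l Q P t) (hR : R ⊆ Ioc Q P) {x₀ : ℕ} (hx₀ : x₀ ∈ Ioc Q P) :
    degNode e (cells (lowerRows l R)) (rowEndNode l x₀) =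
      #{x ∈ R | x₀ < x} - #{x ∈ Ioc x₀ P | x ∉ R} := by
  rw [degNode, rowEndNode_fst, hst.setOf_addable_lowerRows he hl hR hx₀,
    hst.setOf_removable_lowerRows he hl hR hx₀,
    Set.ncard_image_of_injective _ (rowEndNode_injective l),
    Set.ncard_image_of_injective _ (rowEndNode_injective l), Set.ncard_coe_finset,
    Set.ncard_coe_finset]

end IsBottomStaircase

theorem StrictAnti.apply_add_eq_of_ordConnected_range {n : ℕ} {f : Fin (n + 1) → ℕ}
    (hf : StrictAnti f) (hc : (Set.range f).OrdConnected) (i : Fin (n + 1)) : f i + i = f 0 := by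
  induction i using Fin.induction with
  | zero => rfl
  | succ i ih =>
    have hlt := hf (Fin.castSucc_lt_succ (i := i))
    rw [Fin.val_castSucc] at ih
    rw [Fin.val_succ]
    by_contra hne
    obtain ⟨k, hk⟩ := hc.out ⟨_, rfl⟩ ⟨_, rfl⟩
      (show f i.castSucc - 1 ∈ Set.Icc (f i.succ) (f i.castSucc) from ⟨by omega, by omega⟩)
    have h₁ : i.castSucc < k := hf.lt_iff_gt.mp (by omega)
    have h₂ : k < i.succ := hf.lt_iff_gt.mp (by omega)
    exact (Fin.castSucc_lt_iff_succ_le.mp h₁).not_gt h₂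

section BottomSequence

variable {e t : ℕ} {l : ℕ → ℕ}

lemma IsRestricted.monotoneOn_rowEnd (hrestr : IsRestricted e l) :
    MonotoneOn (fun x => l x + (x - 1) * (e - 1)) (Set.Ici 1) := by
  refine monotoneOn_of_le_add_one Set.ordConnected_Ici fun x _ hx _ => ?_
  have := hrestr x hx
  have := sub_one_mul_add_self hx (e - 1)
  simp only [Nat.add_sub_cancel]
  omega

lemma rowEnd_le_of_forall_ladder_le (htmax : ∀ u, (cells l ∩ ladder e u).Nonempty → u ≤ t)
    {x : ℕ} (hx : 1 ≤ x) (hlx : 1 ≤ l x) : l x + (x - 1) * (e - 1) ≤ t :=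
  htmax _ ⟨(x, l x), mem_cells.mpr ⟨hx, hlx, le_rfl⟩, mem_ladder_iff_s9.mpr ⟨hx, hlx, rfl⟩⟩

lemma eq_rowEndNode_of_mem_top_ladder (htmax : ∀ u, (cells l ∩ ladder e u).Nonempty → u ≤ t)
    {p : ℕ × ℕ} (hp : p ∈ cells l ∩ ladder e t) : p = rowEndNode l p.1 := by
  obtain ⟨x, y⟩ := p
  obtain ⟨hc, hlad⟩ := hp
  obtain ⟨hx, hy, hyl⟩ := mem_cells.mp hc
  obtain ⟨-, -, hxy⟩ := mem_ladder_iff_s9.mp hlad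
  have := rowEnd_le_of_forall_ladder_le htmax hx (hy.trans hyl)
  simp only [rowEndNode, Prod.mk.injEq, true_and]
  omega

lemma rowEndNode_mem_top_ladder (hrestr : IsRestricted e l)
    (htmax : ∀ u, (cells l ∩ ladder e u).Nonempty → u ≤ t) {p : ℕ × ℕ}
    (hp : p ∈ cells l ∩ ladder e t) {x : ℕ} (hpx : p.1 ≤ x) (hlx : 1 ≤ l x) :
    rowEndNode l x ∈ cells l ∩ ladder e t := by
  obtain ⟨a, b⟩ := p
  have hrow := eq_rowEndNode_of_mem_top_ladder htmax hp
  simp only [rowEndNode, Prod.mk.injEq, true_and] at hrow hpx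
  subst hrow
  obtain ⟨ha, -, hat⟩ := mem_ladder_iff_s9.mp hp.2
  have hx : 1 ≤ x := ha.trans hpx
  have := hrestr.monotoneOn_rowEnd (Set.mem_Ici.mpr ha) (Set.mem_Ici.mpr hx) hpx
  have := rowEnd_le_of_forall_ladder_le htmax hx hlx
  exact ⟨mem_cells.mpr ⟨hx, hlx, le_rfl⟩, mem_ladder_iff_s9.mpr ⟨hx, hlx, by simp only at *; omega⟩⟩

theorem exists_isBottomStaircase {r : ℕ} {A : Fin r → ℕ × ℕ} (hl : IsPartitionFun l)
    (hrestr : IsRestricted e l) (htmax : ∀ u, (cells l ∩ ladder e u).Nonempty → u ≤ t)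
    (hAmem : ∀ j, A j ∈ cells l ∩ ladder e t)
    (hAsurj : ∀ p ∈ cells l ∩ ladder e t, ∃ j, A j = p)
    (hAord : ∀ u v : Fin r, u < v → (A v).1 < (A u).1) (hr : 0 < r) :
    ∃ P, r ≤ P ∧ IsBottomStaircase e l (P - r) P t ∧ ∀ i, A i = rowEndNode l (P - i) := by
  obtain ⟨n, rfl⟩ : ∃ n, r = n + 1 := ⟨r - 1, by omega⟩
  have hA (i : Fin (n + 1)) : A i = rowEndNode l (A i).1 :=
    eq_rowEndNode_of_mem_top_ladder htmax (hAmem i)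
  have hAmem' (i : Fin (n + 1)) : rowEndNode l (A i).1 ∈ cells l ∩ ladder e t := hA i ▸ hAmem i
  have hAcell (i : Fin (n + 1)) := mem_cells.mp (hAmem' i).1
  have hsqueeze {x : ℕ} (i : Fin (n + 1)) (hix : (A i).1 ≤ x) (hlx : 1 ≤ l x) :
      ∃ k, (A k).1 = x :=
    (hAsurj _ (rowEndNode_mem_top_ladder hrestr htmax (hAmem i) hix hlx)).imp
      fun k hk => by rw [hk, rowEndNode_fst]
  set P := (A 0).1
  have hconn : (Set.range fun i => (A i).1).OrdConnected := by
    refine ⟨?_⟩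
    rintro _ ⟨i, rfl⟩ _ ⟨j, rfl⟩ x ⟨hix, hxj⟩
    have hx : 1 ≤ x := (hAcell i).1.trans hix
    exact hsqueeze i hix ((hAcell j).2.1.trans
      (hl.antitoneOn (Set.mem_Ici.mpr hx) (Set.mem_Ici.mpr (hAcell j).1) hxj))
  have hrow : ∀ i, (A i).1 + i = P :=
    StrictAnti.apply_add_eq_of_ordConnected_range (f := fun i => (A i).1) (hAord · ·) hconn
  have hbelow (x : ℕ) (hPx : P < x) : l x = 0 := by
    by_contra h
    obtain ⟨k, rfl⟩ := hsqueeze 0 hPx.le (by omega)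
    have := hrow k
    omega
  have hIoc (x : ℕ) (hx : x ∈ Ioc (P - (n + 1)) P) : ∃ k, (A k).1 = x := by
    rw [mem_Ioc] at hx
    exact ⟨⟨P - x, by omega⟩, by have := hrow ⟨P - x, by omega⟩; simp only at this; omega⟩
  have hlast := hrow (Fin.last n)
  have := (hAcell (Fin.last n)).1
  rw [Fin.val_last] at hlast
  refine ⟨P, by omega, ⟨fun x hx => ?_, fun x hx => ?_, hbelow, ?_⟩, fun i => ?_⟩
  · obtain ⟨k, rfl⟩ := hIoc x hx
    exact (hAcell k).2.1
  · obtain ⟨k, rfl⟩ := hIoc x hx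
    exact (mem_ladder_iff_s9.mp (hAmem' k).2).2.2
  · have := hrestr P (hAcell 0).1
    rwa [hbelow (P + 1) (by omega), zero_add] at this
  · rw [hA i, ← hrow i, Nat.add_sub_cancel]

end BottomSequence

/-- Inserts the value `n` at position `p` of the one-line notation of `ε`. -/
def insertMax {n : ℕ} (p : Fin (n + 1)) (ε : Equiv.Perm (Fin n)) : Equiv.Perm (Fin (n + 1)) :=
  ((finSuccEquiv' p).trans (Equiv.optionCongr ε)).trans (finSuccEquiv' (Fin.last n)).symm

@[simp]
lemma insertMax_self {n : ℕ} (p : Fin (n + 1)) (ε : Equiv.Perm (Fin n)) :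
    insertMax p ε p = Fin.last n := by
  simp [insertMax, finSuccEquiv'_at, finSuccEquiv'_symm_none]

@[simp]
lemma insertMax_succAbove {n : ℕ} (p : Fin (n + 1)) (ε : Equiv.Perm (Fin n)) (i : Fin n) :
    insertMax p ε (p.succAbove i) = (ε i).castSucc := by
  simp [insertMax, finSuccEquiv'_succAbove, finSuccEquiv'_symm_some, Fin.succAbove_last]

lemma insertMax_bijective (n : ℕ) :
    Function.Bijective (fun pε : Fin (n + 1) × Equiv.Perm (Fin n) => insertMax pε.1 pε.2) := by
  refine ⟨?_, fun σ => ?_⟩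
  · rintro ⟨p, ε⟩ ⟨p', ε'⟩ h
    simp only at h
    obtain rfl : p = p' := (insertMax p ε).injective <| by
      rw [insertMax_self, h, insertMax_self]
    refine Prod.ext rfl (Equiv.ext fun i => Fin.castSucc_injective n ?_)
    simpa using congrArg (· (p.succAbove i)) h
  · set p := σ.symm (Fin.last n)
    have hne (i : Fin n) : σ (p.succAbove i) ≠ Fin.last n := fun h =>
      Fin.succAbove_ne p i (σ.injective (h.trans (σ.apply_symm_apply _).symm))
    have hinj : Function.Injective fun i => (σ (p.succAbove i)).castPred (hne i) := fun i i' h =>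
      Fin.succAbove_right_injective (σ.injective (Fin.castPred_inj.mp h))
    refine ⟨⟨p, Equiv.ofBijective _ (Finite.injective_iff_bijective.mp hinj)⟩,
      Equiv.ext fun x => ?_⟩
    rcases eq_or_ne x p with rfl | hx
    · simp [p]
    · obtain ⟨i, rfl⟩ := Fin.exists_succAbove_eq hx
      simp

def numSmallerBefore {n : ℕ} (σ : Equiv.Perm (Fin n)) (j : Fin n) : ℕ :=
  #{j' | j' < j ∧ σ j' < σ j}

lemma numSmallerBefore_insertMax_self {n : ℕ} (p : Fin (n + 1)) (ε : Equiv.Perm (Fin n)) :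
    numSmallerBefore (insertMax p ε) p = p := by
  have h : ({j' | j' < p ∧ insertMax p ε j' < insertMax p ε p} : Finset _) = Iio p := by
    ext j'
    simp only [mem_filter, mem_univ, true_and, mem_Iio, insertMax_self, and_iff_left_iff_imp,
      Fin.lt_last_iff_ne_last]
    intro hj h
    exact hj.ne ((insertMax p ε).injective (h.trans (insertMax_self p ε).symm))
  rw [numSmallerBefore, h, Fin.card_Iio]

lemma numSmallerBefore_insertMax_succAbove {n : ℕ} (p : Fin (n + 1)) (ε : Equiv.Perm (Fin n))
    (i : Fin n) : numSmallerBefore (insertMax p ε) (p.succAbove i) = numSmallerBefore ε i := by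
  have h : ({j' | j' < p.succAbove i ∧ insertMax p ε j' < insertMax p ε (p.succAbove i)} :
      Finset _) = ({i' | i' < i ∧ ε i' < ε i} : Finset _).map p.succAboveEmb := by
    ext j'
    rcases eq_or_ne j' p with rfl | hj
    · simp [(Fin.castSucc_lt_last _).not_gt]
    · obtain ⟨i', rfl⟩ := Fin.exists_succAbove_eq hj
      simp
  rw [numSmallerBefore, h, card_map, numSmallerBefore]

/-- Equals `n(n-1)/2` minus twice the number of inversions of `σ`. -/
def insertionDegree {n : ℕ} (σ : Equiv.Perm (Fin n)) : ℤ :=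
  ∑ j, (2 * (numSmallerBefore σ j : ℤ) - (σ j : ℕ))

lemma insertionDegree_insertMax {n : ℕ} (p : Fin (n + 1)) (ε : Equiv.Perm (Fin n)) :
    insertionDegree (insertMax p ε) = (2 * (p : ℤ) - n) + insertionDegree ε := by
  rw [insertionDegree, Fin.sum_univ_succAbove _ p]
  simp [numSmallerBefore_insertMax_self, numSmallerBefore_insertMax_succAbove, insertionDegree]

lemma qint_succ (n : ℕ) :
    qint (n + 1) = ∑ p : Fin (n + 1), LaurentPolynomial.T (2 * (p : ℤ) - n) := by
  rw [Fin.sum_univ_eq_sum_range (fun k => LaurentPolynomial.T (2 * (k : ℤ) - n)), qint,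
    ← sum_range_reflect]
  refine sum_congr rfl fun k hk => congrArg _ ?_
  rw [mem_range] at hk
  push_cast [Nat.cast_sub (by omega : k ≤ n)]
  ring

theorem sum_T_insertionDegree (n : ℕ) :
    ∑ σ : Equiv.Perm (Fin n), LaurentPolynomial.T (R := ℤ) (insertionDegree σ) = qfact n := by
  induction n with
  | zero => simp [qfact, insertionDegree]
  | succ n ih =>
    rw [← Fintype.sum_bijective _ (insertMax_bijective n) _ _ fun _ => rfl, Fintype.sum_prod_type]
    simp_rw [insertionDegree_insertMax, LaurentPolynomial.T_add, ← sum_mul_sum, ih, ← qint_succ,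
      qfact, prod_Icc_succ_top (by omega : 1 ≤ n + 1)]
    ring

theorem IsBottomStaircase.degNode_sdiff_perm {e t P r : ℕ} {l : ℕ → ℕ} (he : 2 ≤ e)
    (hl : AntitoneOn l (Set.Ici 1)) (hrP : r ≤ P) (hst : IsBottomStaircase e l (P - r) P t)
    (σ : Equiv.Perm (Fin r)) (j : Fin r) :
    degNode e (cells l \ (fun k => rowEndNode l (P - σ k)) '' {k | k < j})
        (rowEndNode l (P - σ j)) =
      2 * (numSmallerBefore σ j : ℤ) - (σ j : ℕ) := by
  set R : Finset ℕ := (Iio j).image fun k => P - σ k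
  have hinj : Function.Injective fun k : Fin r => P - σ k := fun k k' h => by
    have := k.isLt
    have := k'.isLt
    exact σ.injective (Fin.ext (by simp only at h; omega))
  have hcells : cells l \ (fun k => rowEndNode l (P - σ k)) '' {k | k < j} =
      cells (lowerRows l R) := by
    rw [cells_lowerRows, coe_image, Set.image_image, coe_Iio]
    rfl
  have hR : R ⊆ Ioc (P - r) P := by
    simp only [R, image_subset_iff, mem_Ioc]
    exact fun k _ => ⟨by omega, by omega⟩
  have hx₀ : P - σ j ∈ Ioc (P - r) P := mem_Ioc.mpr ⟨by omega, by omega⟩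
  have hremoved : #{x ∈ R | P - σ j < x} = numSmallerBefore σ j := by
    rw [filter_image, card_image_of_injective _ hinj, numSmallerBefore]
    congr 1
    ext k
    have := (σ k).isLt
    simp only [mem_filter, mem_Iio, mem_univ, true_and, Fin.lt_def]
    omega
  have hsplit : #{x ∈ Ioc (P - σ j) P | x ∉ R} + #{x ∈ R | P - σ j < x} = σ j := by
    have hsame : {x ∈ Ioc (P - σ j) P | x ∈ R} = {x ∈ R | P - σ j < x} := by
      ext x
      simp only [mem_filter, mem_Ioc]
      constructor
      · exact fun h => ⟨h.2, h.1.1⟩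
      · exact fun h => ⟨⟨h.2, (mem_Ioc.mp (hR h.1)).2⟩, h.1⟩
    rw [← hsame, add_comm, card_filter_add_card_filter_not, Nat.card_Ioc]
    omega
  rw [hcells, hst.degNode_lowerRows he hl hR hx₀]
  omega

theorem bottom_sequence_degree_sum_general
    (e r : ℕ) (he : 2 ≤ e) (l : ℕ → ℕ)
    (hl : IsPartitionFun l) (hrestr : IsRestricted e l)
    (t : ℕ)
    (htmax : ∀ u, (cells l ∩ ladder e u).Nonempty → u ≤ t)
    (A : Fin r → ℕ × ℕ)
    (hAmem : ∀ j, A j ∈ cells l ∩ ladder e t)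
    (hAsurj : ∀ p ∈ cells l ∩ ladder e t, ∃ j, A j = p)
    (hAord : ∀ u v : Fin r, u < v → (A v).1 < (A u).1) :
    ∑ σ : Equiv.Perm (Fin r),
        LaurentPolynomial.T (∑ j : Fin r,
          degNode e (cells l \ (fun k => A (σ k)) '' {k : Fin r | k < j}) (A (σ j))) =
      qfact r := by
  have hdeg (σ : Equiv.Perm (Fin r)) (j : Fin r) :
      degNode e (cells l \ (fun k => A (σ k)) '' {k | k < j}) (A (σ j)) =
        2 * (numSmallerBefore σ j : ℤ) - (σ j : ℕ) := by
    obtain ⟨P, hrP, hst, hA⟩ :=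
      exists_isBottomStaircase hl hrestr htmax hAmem hAsurj hAord j.pos
    simp only [hA]
    exact hst.degNode_sdiff_perm he hl.antitoneOn hrP σ j
  simp only [hdeg]
  exact sum_T_insertionDegree r

/-- summing `q` to the total degree of removing the bottom removable
sequence in all possible orders gives `[r]_q!`. -/
theorem bottom_sequence_degree_sum
    (e r : ℕ) (he : 2 ≤ e) (l : ℕ → ℕ)
    (hl : IsPartitionFun l) (hrestr : IsRestricted e l)
    (t : ℕ) (ht : (cells l ∩ ladder e t).Nonempty)
    (htmax : ∀ u, (cells l ∩ ladder e u).Nonempty → u ≤ t)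
    (A : Fin r → ℕ × ℕ)
    (hAmem : ∀ j, A j ∈ cells l ∩ ladder e t)
    (hAinj : Function.Injective A)
    (hAsurj : ∀ p ∈ cells l ∩ ladder e t, ∃ j, A j = p)
    (hAord : ∀ u v : Fin r, u < v → (A v).1 < (A u).1) :
    ∑ σ : Equiv.Perm (Fin r),
        LaurentPolynomial.T (∑ j : Fin r,
          degNode e (cells l \ (fun k => A (σ k)) '' {k : Fin r | k < j}) (A (σ j))) =
      qfact r :=
  bottom_sequence_degree_sum_general e r he l hl hrestr t htmax A hAmem hAsurj hAord

end KN
end
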